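/- arXiv:1909.02123 — 4 statements merged into one kernel-verified Lean document; each statement's English description precedes it below -/
import Mathlib

section
/- For positive integers k and s with r = k - s ≥ 1, the alternating sum ∑_{i=0}^{r-1} (-1)^{i+1} · C(s+i, i) · C(s+r, s+i+1) equals -1. -/
/-!
Expanding `C(s+r+1, s+i+1)` by Pascal's rule splits the sum for `r + 1` into the sum for `r`
and the sum `∑_{i ≤ r} (-1)^i C(s+i, i) C(s+r, s+i)`. Since
`C(s+i, i) C(s+r, s+i) = C(s+r, s) C(r, i)`, the latter is `C(s+r, s) (1 - 1)^r = 0`.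
-/

open Finset

theorem Nat.choose_add_mul_add_choose_add (s n i : ℕ) :
    (s + i).choose i * (s + n).choose (s + i) = (s + n).choose s * n.choose i := by
  rw [← Nat.choose_symm_add, mul_comm, Nat.choose_mul (Nat.le_add_right s i),
    Nat.add_sub_cancel_left, Nat.add_sub_cancel_left]

theorem Int.alternating_sum_range_choose_add_mul_add_choose_add {s n : ℕ} (hn : 0 < n) :
    ∑ i ∈ Finset.range (n + 1), (-1 : ℤ) ^ i * (s + i).choose i * (s + n).choose (s + i) =
      0 := by
  have factor (i : ℕ) : (-1 : ℤ) ^ i * (s + i).choose i * (s + n).choose (s + i) =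
      (s + n).choose s * ((-1) ^ i * n.choose i) := by
    rw [mul_assoc, ← Nat.cast_mul, Nat.choose_add_mul_add_choose_add, Nat.cast_mul]
    ring
  simp only [factor, ← mul_sum, Int.alternating_sum_range_choose_of_ne hn.ne', mul_zero]

theorem stmt1_general (s r : ℕ) (hr1 : 1 ≤ r) :
    ∑ i ∈ Finset.range r,
      (-1 : ℤ) ^ (i + 1) * ((s + i).choose i) * ((s + r).choose (s + i + 1)) = -1 := by
  induction r, hr1 using Nat.le_induction with
  | base => simp
  | succ n hn ih =>
    have pascal (i : ℕ) :
        (-1 : ℤ) ^ (i + 1) * (s + i).choose i * (s + (n + 1)).choose (s + i + 1) =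
        -((-1) ^ i * (s + i).choose i * (s + n).choose (s + i)) +
          (-1) ^ (i + 1) * (s + i).choose i * (s + n).choose (s + i + 1) := by
      rw [← add_assoc, Nat.choose_succ_succ', Nat.cast_add]
      ring
    rw [sum_congr rfl fun i _ => pascal i, sum_add_distrib, sum_neg_distrib,
      Int.alternating_sum_range_choose_add_mul_add_choose_add hn, sum_range_succ,
      Nat.choose_eq_zero_of_lt (Nat.lt_succ_self (s + n)), ih]
    simp

/-- For positive integers `k` and `s` with `r = k - s ≥ 1`, the alternating sum
`∑_{i=0}^{r-1} (-1)^{i+1} C(s+i, i) C(s+r, s+i+1)` equals `-1`. -/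
theorem stmt1 (k s r : ℕ) (hk : 0 < k) (hs : 0 < s) (hr : r = k - s) (hr1 : 1 ≤ r) :
    ∑ i ∈ Finset.range r,
      (-1 : ℤ) ^ (i + 1) * ((s + i).choose i) * ((s + r).choose (s + i + 1)) = -1 :=
  stmt1_general s r hr1
end

section
/- Let μ : ℕ → ℤ be defined recursively by μ(s+1) ≡ -λ (mod n), and for s+1 < m ≤ k, μ(m) ≡ -λ - ∑_{j=s+1}^{m-1} C(m, j) · μ(j) (mod n) (this models the congruence constraints on J-characteristics of an orthogonal array of strength s with index λ). Then for all ℓ with 1 ≤ ℓ ≤ k - s, μ(s+ℓ) ≡ (-1)^ℓ · λ · C(s+ℓ-1, ℓ-1) (mod n). -/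
/-!
Moving the term `μ m` to the left, the recurrence says `∑_{j=s+1}^{m} C(m, j) μ(j) = -λ` for
`s < m ≤ k`. This system is unitriangular, so it has at most one solution, and the claimed closed
form solves it by the identity `∑_{i ≤ p} C(s+p+1, s+i+1) (-1)^i C(s+i, s) = 1`. That identity
follows by induction on `p` through Pascal's rule: the new terms sum to
`C(s+p+1, s) ∑_i (-1)^i C(p+1, i) = 0`, by `C(n, k) C(k, s) = C(n, s) C(n-s, k-s)`.
-/

open Finset

theorem sum_range_neg_one_pow_mul_add_choose_mul_choose {s ℓ : ℕ} (hℓ : ℓ ≠ 0) :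
    ∑ j ∈ range (ℓ + 1), (-1 : ℤ) ^ j * (s + ℓ).choose (s + j) * (s + j).choose s = 0 := by
  have hfactor : ∀ j ∈ range (ℓ + 1), (-1 : ℤ) ^ j * (s + ℓ).choose (s + j) * (s + j).choose s
      = (s + ℓ).choose s * ((-1) ^ j * ℓ.choose j) := by
    intro j _
    have h := Nat.choose_mul (n := s + ℓ) (k := s + j) (s := s) (Nat.le_add_right s j)
    simp only [Nat.add_sub_cancel_left] at h
    rw [mul_assoc, ← Nat.cast_mul, h]
    push_cast
    ring
  rw [sum_congr rfl hfactor, ← mul_sum, Int.alternating_sum_range_choose_of_ne hℓ, mul_zero]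

theorem sum_range_choose_mul_neg_one_pow_mul_choose (s p : ℕ) :
    ∑ i ∈ range (p + 1), ((s + p + 1).choose (s + i + 1) : ℤ) * ((-1) ^ i * (s + i).choose s) = 1 := by
  induction p with
  | zero => simp
  | succ p ih =>
    have hpascal : ∀ i ∈ range (p + 2),
        ((s + (p + 1) + 1).choose (s + i + 1) : ℤ) * ((-1) ^ i * (s + i).choose s)
          = (-1) ^ i * (s + (p + 1)).choose (s + i) * (s + i).choose s
            + ((s + p + 1).choose (s + i + 1) : ℤ) * ((-1) ^ i * (s + i).choose s) := by
      intro i _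
      rw [Nat.choose_succ_succ', ← add_assoc]
      push_cast
      ring
    rw [sum_congr rfl hpascal, sum_add_distrib,
      sum_range_neg_one_pow_mul_add_choose_mul_choose p.succ_ne_zero, zero_add,
      sum_range_succ, ih, Nat.choose_eq_zero_of_lt (by omega)]
    simp

theorem eq_mul_neg_one_pow_mul_choose_of_sum_range_choose_mul_eq {R : Type*} [CommRing R]
    {s N : ℕ} {c : R} {a : ℕ → R}
    (h : ∀ p < N, ∑ i ∈ range (p + 1), ((s + p + 1).choose (s + i + 1) : R) * a i = c) :
    ∀ p < N, a p = c * ((-1) ^ p * (s + p).choose s) := by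
  intro p
  induction p using Nat.strong_induction_on with
  | _ p ih =>
  intro hp
  have hcast := congrArg (Int.cast : ℤ → R) (sum_range_choose_mul_neg_one_pow_mul_choose s p)
  push_cast at hcast
  have hsum := h p hp
  rw [sum_range_succ, Nat.choose_self, Nat.cast_one, one_mul,
    sum_congr rfl fun i hi => by rw [ih i (mem_range.1 hi) ((mem_range.1 hi).trans hp)]] at hsum
  rw [← sum_congr rfl fun i _ => mul_left_comm c _ _, ← mul_sum] at hsum
  rw [sum_range_succ, Nat.choose_self, Nat.cast_one, one_mul] at hcast
  linear_combination hsum - c * hcast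

theorem stmt2_general (lam n k s : ℕ)
    (μ : ℕ → ZMod n)
    (hbase : μ (s + 1) = -(lam : ZMod n))
    (hrec : ∀ m, s + 1 < m → m ≤ k →
      μ m = -(lam : ZMod n) - ∑ j ∈ Finset.Ico (s + 1) m, (m.choose j : ZMod n) * μ j) :
    ∀ ℓ, 1 ≤ ℓ → ℓ ≤ k - s →
      μ (s + ℓ) = (-1 : ZMod n) ^ ℓ * (lam : ZMod n) * ((s + ℓ - 1).choose (ℓ - 1) : ZMod n) := by
  have hsystem : ∀ p < k - s,
      ∑ i ∈ range (p + 1), ((s + p + 1).choose (s + i + 1) : ZMod n) * μ (s + i + 1) = -lam := by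
    rintro (_ | p) hp
    · simp [hbase]
    · have hm := hrec (s + (p + 1) + 1) (by omega) (by omega)
      rw [sum_Ico_eq_sum_range, show s + (p + 1) + 1 - (s + 1) = p + 1 by omega] at hm
      simp only [add_right_comm s 1] at hm
      rw [sum_range_succ, Nat.choose_self, Nat.cast_one, one_mul, hm]
      ring
  rintro ℓ hℓ hℓk
  obtain ⟨p, rfl⟩ : ∃ p, ℓ = p + 1 := ⟨ℓ - 1, by omega⟩
  rw [← add_assoc, eq_mul_neg_one_pow_mul_choose_of_sum_range_choose_mul_eq hsystem p (by omega),
    Nat.add_sub_cancel, Nat.add_sub_cancel, Nat.choose_symm_add]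
  ring

/-- Let `μ : ℕ → ZMod n` satisfy `μ (s+1) = -λ` and, for `s+1 < m ≤ k`,
`μ m = -λ - ∑_{j=s+1}^{m-1} C(m, j) * μ j`.  Then for all `1 ≤ ℓ ≤ k - s`,
`μ (s+ℓ) = (-1)^ℓ * λ * C(s+ℓ-1, ℓ-1)` in `ZMod n`. -/
theorem stmt2 (lam n k s : ℕ) (hlam : 0 < lam) (hn : 0 < n) (hs : 0 < s) (hk : s + 1 ≤ k)
    (μ : ℕ → ZMod n)
    (hbase : μ (s + 1) = -(lam : ZMod n))
    (hrec : ∀ m, s + 1 < m → m ≤ k →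
      μ m = -(lam : ZMod n) - ∑ j ∈ Finset.Ico (s + 1) m, (m.choose j : ZMod n) * μ j) :
    ∀ ℓ, 1 ≤ ℓ → ℓ ≤ k - s →
      μ (s + ℓ) = (-1 : ZMod n) ^ ℓ * (lam : ZMod n) * ((s + ℓ - 1).choose (ℓ - 1) : ZMod n) :=
  stmt2_general lam n k s μ hbase hrec
end

section
/- Let k ≥ 1 and consider the group G(k)^OD generated by G^iso(k,2) = S₂ ≀ S_k together with the operations R_j (j = 1,...,k) acting on {-1,1}^k by R_j(z)_i = z_i·z_j for i ≠ j and R_j(z)_j = z_j. The orbits of the diagonal action of G(k)^OD on {-1,1}^k × {-1,1}^k are O'₀ = {(z,z)} and, for i = 1,...,⌈k/2⌉, O'_i = {(z₁,z₂) : d(z₁,z₂) = i or d(z₁,z₂) = k+1-i}, where d is Hamming distance; in particular there are ⌈k/2⌉ + 1 orbits. -/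
/-- The sign-switch permutation of `{-1,1}^k` multiplying each coordinate by `ε i`. -/
def signFlip (k : ℕ) (ε : Fin k → ℤˣ) : Equiv.Perm (Fin k → ℤˣ) :=
  Function.Involutive.toPerm (fun z i => ε i * z i)
    (by intro z; funext i; simp [← mul_assoc, Int.units_mul_self])

/-- The column permutation of `{-1,1}^k` induced by `σ ∈ S_k`. -/
def colPerm (k : ℕ) (σ : Equiv.Perm (Fin k)) : Equiv.Perm (Fin k → ℤˣ) :=
  Equiv.arrowCongr σ (Equiv.refl ℤˣ)

/-- The operation `R_j` on `{-1,1}^k`: `(R_j z)_i = z_i z_j` for `i ≠ j`, `(R_j z)_j = z_j`. -/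
def negMul (k : ℕ) (j : Fin k) : Equiv.Perm (Fin k → ℤˣ) :=
  Function.Involutive.toPerm (fun z i => if i = j then z j else z i * z j)
    (by
      intro z; funext i
      by_cases h : i = j <;> simp [h, mul_assoc, Int.units_mul_self])

/-- The group `G(k)^OD ≤ Sym({-1,1}^k)` generated by `G^iso(k,2) = S₂ ≀ S_k`
(sign switches and column permutations) together with the operations `R_j`. -/
def GOD (k : ℕ) : Subgroup (Equiv.Perm (Fin k → ℤˣ)) :=
  Subgroup.closure (Set.range (signFlip k) ∪ Set.range (colPerm k) ∪ Set.range (negMul k))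


/-!
Sign switches and coordinate permutations (`S₂ ≀ S_k`) act transitively on pairs at a given
Hamming distance `d`: move the first point to `1`, then sort the coordinates where the second
one is `-1`. The operation `R_j` fixes `d` when the two points agree in coordinate `j` and
replaces it by `k + 1 - d` when they differ there. Hence `min d (k + 1 - d)` is a complete
invariant of the orbits, and it takes exactly the values `0, …, ⌈k/2⌉`.
-/

def invariantPerms {α β : Type*} (F : α → α → β) : Subgroup (Equiv.Perm α) where
  carrier := {g | ∀ x y, F (g x) (g y) = F x y}
  one_mem' _ _ := rfl
  mul_mem' hg hh x y := (hg _ _).trans (hh x y)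
  inv_mem' {g} hg x y := by
    simpa only [Equiv.Perm.coe_inv, Equiv.apply_symm_apply] using (hg (g⁻¹ x) (g⁻¹ y)).symm

theorem Set.ncard_setOf_preimage_singleton_eq_ncard_range {α β : Type*} (F : α → β) :
    {O : Set α | ∃ p, O = F ⁻¹' {F p}}.ncard = (Set.range F).ncard := by
  have hfibres : {O : Set α | ∃ p, O = F ⁻¹' {F p}} = (fun b => F ⁻¹' {b}) '' Set.range F := by
    ext O
    simp [eq_comm]
  rw [hfibres]
  refine Set.InjOn.ncard_image ?_
  rintro _ ⟨p, rfl⟩ _ _ h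
  exact (Set.ext_iff.mp h p).mp rfl

section Hamming

variable {ι β : Type*} [Fintype ι]

theorem hammingDist_comp_perm [DecidableEq β] (σ : Equiv.Perm ι) (x y : ι → β) :
    hammingDist (x ∘ σ) (y ∘ σ) = hammingDist x y :=
  Finset.card_equiv σ (by simp)

theorem exists_hammingDist_one_eq [DecidableEq ι] {m : ℕ} (hm : m ≤ Fintype.card ι) :
    ∃ w : ι → ℤˣ, hammingDist 1 w = m := by
  obtain ⟨s, -, hs⟩ := Finset.exists_subset_card_eq (s := Finset.univ) hm
  refine ⟨fun i => if i ∈ s then -1 else 1, ?_⟩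
  rw [← hs]
  unfold hammingDist
  congr 1
  ext i
  by_cases hi : i ∈ s <;> simp [hi]

theorem exists_perm_comp_eq_of_hammingDist_one_eq [DecidableEq ι] {u v : ι → ℤˣ}
    (h : hammingDist 1 u = hammingDist 1 v) : ∃ σ : Equiv.Perm ι, u ∘ σ = v := by
  have hcard : Fintype.card {i // 1 ≠ v i} = Fintype.card {i // 1 ≠ u i} := by
    rw [Fintype.card_subtype, Fintype.card_subtype]
    exact h.symm
  set e := Fintype.equivOfCardEq hcard
  set σ := e.extendSubtype
  refine ⟨σ, funext fun i => ?_⟩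
  by_cases hi : 1 ≠ v i
  · have hσi : 1 ≠ u (σ i) := e.extendSubtype_mem i hi
    rw [Function.comp_apply, Int.units_ne_iff_eq_neg.mp hσi.symm,
      Int.units_ne_iff_eq_neg.mp (Ne.symm hi)]
  · have hσi : ¬1 ≠ u (σ i) := e.extendSubtype_not_mem i hi
    rw [not_not] at hi hσi
    rw [Function.comp_apply, ← hi, ← hσi]

end Hamming

def distClass (k d : ℕ) : ℕ := min d (k + 1 - d)

theorem distClass_eq_distClass_iff {k d e : ℕ} (hd : d ≤ k) (he : e ≤ k) :
    distClass k d = distClass k e ↔ d = e ∨ d + e = k + 1 := by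
  unfold distClass
  omega

theorem distClass_le (k d : ℕ) : distClass k d ≤ (k + 1) / 2 := by
  unfold distClass
  omega

theorem distClass_of_le {k d : ℕ} (hd : d ≤ (k + 1) / 2) : distClass k d = d := by
  unfold distClass
  omega

namespace GOD

variable {k : ℕ}

theorem colPerm_symm_apply (σ : Equiv.Perm (Fin k)) (z : Fin k → ℤˣ) :
    colPerm k σ.symm z = z ∘ σ := rfl

theorem negMul_apply (j : Fin k) (z : Fin k → ℤˣ) (i : Fin k) :
    negMul k j z i = if i = j then z j else z i * z j := rfl

theorem signFlip_mem (ε : Fin k → ℤˣ) : signFlip k ε ∈ GOD k :=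
  Subgroup.subset_closure (Or.inl (Or.inl ⟨ε, rfl⟩))

theorem colPerm_mem (σ : Equiv.Perm (Fin k)) : colPerm k σ ∈ GOD k :=
  Subgroup.subset_closure (Or.inl (Or.inr ⟨σ, rfl⟩))

theorem negMul_mem (j : Fin k) : negMul k j ∈ GOD k :=
  Subgroup.subset_closure (Or.inr ⟨j, rfl⟩)

theorem hammingDist_le (z w : Fin k → ℤˣ) : hammingDist z w ≤ k := by
  simpa using hammingDist_le_card_fintype (x := z) (y := w)

theorem signFlip_self (z : Fin k → ℤˣ) : signFlip k z z = 1 :=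
  funext fun i => Int.units_mul_self (z i)

theorem signFlip_one (ε : Fin k → ℤˣ) : signFlip k ε 1 = ε :=
  funext fun i => mul_one (ε i)

theorem signFlip_signFlip (ε z : Fin k → ℤˣ) : signFlip k ε (signFlip k ε z) = z :=
  (signFlip k ε).symm_apply_apply z

theorem colPerm_one (σ : Equiv.Perm (Fin k)) : colPerm k σ 1 = 1 := rfl

theorem hammingDist_signFlip (ε z w : Fin k → ℤˣ) :
    hammingDist (signFlip k ε z) (signFlip k ε w) = hammingDist z w :=
  hammingDist_comp (fun i => (ε i * ·)) fun i => mul_right_injective (ε i)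

theorem hammingDist_one_signFlip_self (z w : Fin k → ℤˣ) :
    hammingDist 1 (signFlip k z w) = hammingDist z w := by
  rw [← signFlip_self z, hammingDist_signFlip]

theorem hammingDist_negMul_of_eq {j : Fin k} {z w : Fin k → ℤˣ} (h : z j = w j) :
    hammingDist (negMul k j z) (negMul k j w) = hammingDist z w := by
  unfold hammingDist
  congr 1
  ext i
  by_cases hij : i = j <;> simp [negMul_apply, hij, h]

theorem hammingDist_negMul_of_ne {j : Fin k} {z w : Fin k → ℤˣ} (h : z j ≠ w j) :
    hammingDist (negMul k j z) (negMul k j w) = k + 1 - hammingDist z w := by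
  have hdiff : ({i | negMul k j z i ≠ negMul k j w i} : Finset (Fin k))
      = insert j ({i | z i ≠ w i} : Finset (Fin k))ᶜ := by
    ext i
    by_cases hij : i = j
    · subst hij
      simp only [Finset.mem_filter, Finset.mem_insert]
      simp [negMul_apply, h]
    · have hzj : z j = -w j := Int.units_ne_iff_eq_neg.mp h
      simp [negMul_apply, hij, hzj, Int.units_ne_iff_eq_neg]
  have hj : j ∉ ({i | z i ≠ w i} : Finset (Fin k))ᶜ := by simpa using h
  have hcompl : ({i | z i ≠ w i} : Finset (Fin k))ᶜ.card = k - hammingDist z w := by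
    rw [Finset.card_compl, Fintype.card_fin]
    rfl
  have hpos : 1 ≤ hammingDist z w := hammingDist_pos.mpr fun hzw => h (congrFun hzw j)
  have hle := hammingDist_le z w
  change Finset.card _ = _
  rw [hdiff, Finset.card_insert_of_notMem hj, hcompl]
  omega

theorem distClass_hammingDist_negMul (j : Fin k) (z w : Fin k → ℤˣ) :
    distClass k (hammingDist (negMul k j z) (negMul k j w)) = distClass k (hammingDist z w) := by
  by_cases h : z j = w j
  · rw [hammingDist_negMul_of_eq h]
  · have hpos : 1 ≤ hammingDist z w := hammingDist_pos.mpr fun hzw => h (congrFun hzw j)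
    have hle := hammingDist_le z w
    rw [hammingDist_negMul_of_ne h]
    unfold distClass
    omega

theorem le_invariantPerms_distClass :
    GOD k ≤ invariantPerms fun z w => distClass k (hammingDist z w) := by
  refine Subgroup.closure_le _ |>.mpr ?_
  rintro _ ((⟨ε, rfl⟩ | ⟨σ, rfl⟩) | ⟨j, rfl⟩) z w
  · exact congrArg _ (hammingDist_signFlip ε z w)
  · exact congrArg _ (hammingDist_comp_perm σ.symm z w)
  · exact distClass_hammingDist_negMul j z w

theorem exists_mem_of_hammingDist_eq {z₁ w₁ z₂ w₂ : Fin k → ℤˣ}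
    (h : hammingDist z₁ w₁ = hammingDist z₂ w₂) : ∃ g ∈ GOD k, g z₁ = z₂ ∧ g w₁ = w₂ := by
  have hweight : hammingDist 1 (signFlip k z₁ w₁) = hammingDist 1 (signFlip k z₂ w₂) := by
    rw [hammingDist_one_signFlip_self, hammingDist_one_signFlip_self, h]
  obtain ⟨σ, hσ⟩ := exists_perm_comp_eq_of_hammingDist_one_eq hweight
  refine ⟨signFlip k z₂ * colPerm k σ.symm * signFlip k z₁,
    mul_mem (mul_mem (signFlip_mem z₂) (colPerm_mem σ.symm)) (signFlip_mem z₁), ?_, ?_⟩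
  · simp only [Equiv.Perm.mul_apply, signFlip_self, colPerm_one, signFlip_one]
  · simp only [Equiv.Perm.mul_apply, colPerm_symm_apply, hσ, signFlip_signFlip]

theorem exists_mem_of_hammingDist_add_eq {z₁ w₁ z₂ w₂ : Fin k → ℤˣ}
    (h : hammingDist z₁ w₁ + hammingDist z₂ w₂ = k + 1) :
    ∃ g ∈ GOD k, g z₁ = z₂ ∧ g w₁ = w₂ := by
  have hle₂ := hammingDist_le z₂ w₂
  obtain ⟨j, hj⟩ : ∃ j, z₁ j ≠ w₁ j :=
    Function.ne_iff.mp (hammingDist_pos.mp (by omega))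
  obtain ⟨g, hg, hgz, hgw⟩ := exists_mem_of_hammingDist_eq (z₂ := z₂) (w₂ := w₂)
    (by rw [hammingDist_negMul_of_ne hj]; omega)
  exact ⟨g * negMul k j, mul_mem hg (negMul_mem j), hgz, hgw⟩

theorem exists_mem_iff (z₁ w₁ z₂ w₂ : Fin k → ℤˣ) :
    (∃ g ∈ GOD k, g z₁ = z₂ ∧ g w₁ = w₂) ↔
      hammingDist z₁ w₁ = hammingDist z₂ w₂ ∨ hammingDist z₁ w₁ + hammingDist z₂ w₂ = k + 1 := by
  have hle₁ := hammingDist_le z₁ w₁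
  have hle₂ := hammingDist_le z₂ w₂
  constructor
  · rintro ⟨g, hg, rfl, rfl⟩
    exact (distClass_eq_distClass_iff hle₁ hle₂).mp (le_invariantPerms_distClass hg z₁ w₁).symm
  · rintro (h | h)
    exacts [exists_mem_of_hammingDist_eq h, exists_mem_of_hammingDist_add_eq h]

theorem range_distClass_hammingDist :
    Set.range (fun q : (Fin k → ℤˣ) × (Fin k → ℤˣ) => distClass k (hammingDist q.1 q.2))
      = Set.Iic ((k + 1) / 2) := by
  ext m
  refine ⟨fun ⟨q, hq⟩ => hq ▸ distClass_le k _, fun hm => ?_⟩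
  obtain ⟨w, hw⟩ := exists_hammingDist_one_eq (ι := Fin k) (m := m)
    (by rw [Fintype.card_fin]; exact le_trans hm (by omega))
  exact ⟨(1, w), show distClass k (hammingDist 1 w) = m by rw [hw, distClass_of_le hm]⟩

theorem setOf_exists_mem_eq_preimage (p : (Fin k → ℤˣ) × (Fin k → ℤˣ)) :
    {q : (Fin k → ℤˣ) × (Fin k → ℤˣ) | ∃ g ∈ GOD k, g p.1 = q.1 ∧ g p.2 = q.2}
      = (fun q : (Fin k → ℤˣ) × (Fin k → ℤˣ) => distClass k (hammingDist q.1 q.2)) ⁻¹'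
          {distClass k (hammingDist p.1 p.2)} := by
  ext q
  rw [Set.mem_ofPred_eq, exists_mem_iff, Set.mem_preimage, Set.mem_singleton_iff, eq_comm,
    add_comm (hammingDist p.1 p.2),
    distClass_eq_distClass_iff (hammingDist_le _ _) (hammingDist_le _ _)]

end GOD

theorem stmt18_general (k : ℕ) :
    (∀ p q : (Fin k → ℤˣ) × (Fin k → ℤˣ),
      (∃ g ∈ GOD k, g p.1 = q.1 ∧ g p.2 = q.2)
        ↔ (hammingDist p.1 p.2 = hammingDist q.1 q.2 ∨
            hammingDist p.1 p.2 + hammingDist q.1 q.2 = k + 1)) ∧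
    Set.ncard {O : Set ((Fin k → ℤˣ) × (Fin k → ℤˣ)) |
        ∃ p : (Fin k → ℤˣ) × (Fin k → ℤˣ),
          O = {q | ∃ g ∈ GOD k, g p.1 = q.1 ∧ g p.2 = q.2}}
      = (k + 1) / 2 + 1 := by
  refine ⟨fun p q => GOD.exists_mem_iff p.1 p.2 q.1 q.2, ?_⟩
  simp only [GOD.setOf_exists_mem_eq_preimage]
  rw [Set.ncard_setOf_preimage_singleton_eq_ncard_range, GOD.range_distClass_hammingDist, ← Finset.coe_Iic,
    Set.ncard_coe_finset, Nat.card_Iic]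

/-- The orbits of the diagonal action of `G(k)^OD` on `{-1,1}^k × {-1,1}^k` are the
diagonal `{(z,z)}` and, for `i = 1,…,⌈k/2⌉`, the classes
`{(z₁,z₂) : d(z₁,z₂) ∈ {i, k+1-i}}`: two pairs lie in the same orbit iff their Hamming
distances agree or sum to `k+1`; in particular there are `⌈k/2⌉ + 1` orbits. -/
theorem stmt18 (k : ℕ) (hk : 1 ≤ k) :
    (∀ p q : (Fin k → ℤˣ) × (Fin k → ℤˣ),
      (∃ g ∈ GOD k, g p.1 = q.1 ∧ g p.2 = q.2)
        ↔ (hammingDist p.1 p.2 = hammingDist q.1 q.2 ∨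
            hammingDist p.1 p.2 + hammingDist q.1 q.2 = k + 1)) ∧
    Set.ncard {O : Set ((Fin k → ℤˣ) × (Fin k → ℤˣ)) |
        ∃ p : (Fin k → ℤˣ) × (Fin k → ℤˣ),
          O = {q | ∃ g ∈ GOD k, g p.1 = q.1 ∧ g p.2 = q.2}}
      = (k + 1) / 2 + 1 :=
  stmt18_general k
end

section
/- For positive integers k, s with s even, s < k, n = 2, and any index λ, every feasible frequency vector x of an OA(λ2^s, k, 2, s) satisfies: if J_u^x = 0 for all u with |u| = m for some even m ≥ s+2, then (under the action of the group G(k)^OD preserving the feasible set) also J_{u''}^x = 0 for all u'' with |u''| = m - 1. Concretely: the transformation R_j maps the J-characteristic indexed by an even-size set ℓ with j ∈ ℓ to the J-characteristic indexed by ℓ\{j\} (up to sign), so vanishing of all even-level J-characteristics at level m forces vanishing at level m-1 for all frequency vectors in the feasible set. -/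
/-!
`R_j` is an involution of `{±1}^k` with `∏_{i ∈ v} R_j(z)_i = z_j^{|v \ {j}|} ∏_{i ∈ v} z_i`, so
`x ↦ x ∘ R_j` permutes frequency vectors and sends each `J`-characteristic to one of the same
or a neighbouring level. For even `s` these levels stay within `1, …, s` whenever the original one
does, so `x ∘ R_j` is again feasible. Given `u` of odd size `m - 1` and `j ∉ u`, the `J`-characteristic
of `x ∘ R_j` at the level-`m` set `insert j u` is that of `x` at `u`, and it vanishes by hypothesis.
-/

/-- `x` is the frequency vector of an `OA(λ2^s, k, 2, s)` (in the `J`-characteristic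
formulation): the total count is `λ 2^s` and all `J`-characteristics of levels `1,…,s`
vanish. -/
def OAFeasible (k s lam : ℕ) (x : (Fin k → ℤˣ) → ℕ) : Prop :=
  (∑ z : Fin k → ℤˣ, x z = lam * 2 ^ s) ∧
  ∀ u : Finset (Fin k), u.Nonempty → u.card ≤ s →
    ∑ z : Fin k → ℤˣ, (x z : ℤ) * ∏ j ∈ u, (z j : ℤ) = 0

open Finset

variable {k : ℕ}

/-- The `J`-characteristic `J_u^x` of a frequency vector `x`. -/
def jChar (x : (Fin k → ℤˣ) → ℕ) (u : Finset (Fin k)) : ℤ :=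
  ∑ z : Fin k → ℤˣ, (x z : ℤ) * ∏ j ∈ u, (z j : ℤ)

lemma units_coe_pow_of_even (w : ℤˣ) {n : ℕ} (hn : Even n) : (w : ℤ) ^ n = 1 := by
  rcases Int.units_eq_one_or w with rfl | rfl <;> simp [hn.neg_one_pow]

lemma units_coe_pow_of_odd (w : ℤˣ) {n : ℕ} (hn : Odd n) : (w : ℤ) ^ n = w := by
  rcases Int.units_eq_one_or w with rfl | rfl <;> simp [hn.neg_one_pow]

/-- The operation `R_j` on `{±1}^k`. -/
def reflect (j : Fin k) (z : Fin k → ℤˣ) : Fin k → ℤˣ :=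
  fun i => if i = j then z j else z i * z j

lemma reflect_involutive (j : Fin k) : Function.Involutive (reflect j) := by
  intro z
  funext i
  by_cases hi : i = j
  · simp [reflect, hi]
  · simp [reflect, hi, mul_assoc, Int.units_mul_self]

lemma prod_reflect (j : Fin k) (z : Fin k → ℤˣ) (v : Finset (Fin k)) :
    ∏ i ∈ v, (reflect j z i : ℤ) = (∏ i ∈ v, (z i : ℤ)) * (z j : ℤ) ^ #(v.erase j) := by
  have hcoord : ∀ i, (reflect j z i : ℤ) = z i * (z j : ℤ) ^ (if i ≠ j then 1 else 0) := by
    intro i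
    by_cases hi : i = j <;> simp [reflect, hi]
  simp_rw [hcoord, prod_mul_distrib, prod_pow_eq_pow_sum, ← card_filter, filter_ne']

lemma jChar_comp_reflect (x : (Fin k → ℤˣ) → ℕ) (j : Fin k) (v : Finset (Fin k)) :
    jChar (x ∘ reflect j) v =
      ∑ z : Fin k → ℤˣ, (x z : ℤ) * ((∏ i ∈ v, (z i : ℤ)) * (z j : ℤ) ^ #(v.erase j)) := by
  rw [jChar, ← Equiv.sum_comp (reflect_involutive j).toPerm]
  simp [reflect_involutive j _, prod_reflect]

lemma jChar_comp_reflect_of_even (x : (Fin k → ℤˣ) → ℕ) {j : Fin k} {v : Finset (Fin k)}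
    (hv : Even #(v.erase j)) : jChar (x ∘ reflect j) v = jChar x v := by
  rw [jChar_comp_reflect]
  simp [jChar, units_coe_pow_of_even _ hv]

lemma jChar_comp_reflect_of_mem (x : (Fin k → ℤˣ) → ℕ) {j : Fin k} {v : Finset (Fin k)}
    (hj : j ∈ v) (hv : Odd #(v.erase j)) : jChar (x ∘ reflect j) v = jChar x (v.erase j) := by
  have hprod : ∀ z : Fin k → ℤˣ,
      (∏ i ∈ v, (z i : ℤ)) * z j = ∏ i ∈ v.erase j, (z i : ℤ) := by
    intro z
    rw [← mul_prod_erase v _ hj, mul_comm, ← mul_assoc, Int.units_coe_mul_self, one_mul]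
  rw [jChar_comp_reflect]
  simp [jChar, units_coe_pow_of_odd _ hv, hprod]

lemma jChar_comp_reflect_of_notMem (x : (Fin k → ℤˣ) → ℕ) {j : Fin k} {v : Finset (Fin k)}
    (hj : j ∉ v) (hv : Odd #v) : jChar (x ∘ reflect j) v = jChar x (insert j v) := by
  have hv' : Odd #(v.erase j) := by rwa [erase_eq_of_notMem hj]
  rw [jChar_comp_reflect]
  simp [jChar, units_coe_pow_of_odd _ hv', prod_insert hj, mul_comm]

lemma OAFeasible.comp_reflect {s lam : ℕ} {x : (Fin k → ℤˣ) → ℕ} (hx : OAFeasible k s lam x)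
    (hs : Even s) (j : Fin k) : OAFeasible k s lam (x ∘ reflect j) := by
  refine ⟨by rw [← hx.1]; exact Equiv.sum_comp (reflect_involutive j).toPerm x, ?_⟩
  intro v hv hvs
  change jChar _ v = 0
  rcases Nat.even_or_odd #(v.erase j) with heven | hodd
  · exact (jChar_comp_reflect_of_even x heven).trans (hx.2 v hv hvs)
  by_cases hj : j ∈ v
  · rw [jChar_comp_reflect_of_mem x hj hodd]
    exact hx.2 _ (card_pos.1 hodd.pos) (card_erase_le.trans hvs)
  · rw [erase_eq_of_notMem hj] at hodd
    rw [jChar_comp_reflect_of_notMem x hj hodd]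
    refine hx.2 _ (insert_nonempty j v) ?_
    rw [card_insert_of_notMem hj]
    -- `#v` is odd and `s` even, so `#v < s`
    rcases hs with ⟨a, rfl⟩
    rcases hodd with ⟨b, hb⟩
    omega

theorem stmt19_general (k s lam m : ℕ) (hs : Even s) (hm : Even m)
    (hms : s + 2 ≤ m) (hmk : m ≤ k)
    (hlevel : ∀ x : (Fin k → ℤˣ) → ℕ, OAFeasible k s lam x →
      ∀ u : Finset (Fin k), u.card = m →
        ∑ z : Fin k → ℤˣ, (x z : ℤ) * ∏ j ∈ u, (z j : ℤ) = 0) :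
    ∀ x : (Fin k → ℤˣ) → ℕ, OAFeasible k s lam x →
      ∀ u : Finset (Fin k), u.card = m - 1 →
        ∑ z : Fin k → ℤˣ, (x z : ℤ) * ∏ j ∈ u, (z j : ℤ) = 0 := by
  intro x hx u hu
  obtain ⟨j, hj⟩ : ∃ j, j ∉ u := by
    by_contra! hall
    rw [eq_univ_of_forall hall, card_univ, Fintype.card_fin] at hu
    omega
  have hcard : #(insert j u) = m := by rw [card_insert_of_notMem hj]; omega
  have hodd : Odd #((insert j u).erase j) := by
    rw [erase_insert hj, hu]
    exact Nat.Even.sub_odd (by omega) hm odd_one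
  have h := hlevel _ (hx.comp_reflect hs j) _ hcard
  rwa [← jChar, jChar_comp_reflect_of_mem x (mem_insert_self j u) hodd, erase_insert hj] at h

/-- For `n = 2` and even strength `s`: if every feasible frequency vector `x` of an
`OA(λ2^s, k, 2, s)` has all its `J`-characteristics of some even level `m ≥ s + 2`
equal to zero, then every feasible frequency vector also has all of its
`J`-characteristics of level `m - 1` equal to zero. -/
theorem stmt19 (k s lam m : ℕ) (hs : Even s) (hsk : s < k) (hm : Even m)
    (hms : s + 2 ≤ m) (hmk : m ≤ k)
    (hlevel : ∀ x : (Fin k → ℤˣ) → ℕ, OAFeasible k s lam x →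
      ∀ u : Finset (Fin k), u.card = m →
        ∑ z : Fin k → ℤˣ, (x z : ℤ) * ∏ j ∈ u, (z j : ℤ) = 0) :
    ∀ x : (Fin k → ℤˣ) → ℕ, OAFeasible k s lam x →
      ∀ u : Finset (Fin k), u.card = m - 1 →
        ∑ z : Fin k → ℤˣ, (x z : ℤ) * ∏ j ∈ u, (z j : ℤ) = 0 :=
  stmt19_general k s lam m hs hm hms hmk hlevel
end
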